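/- Ŵ is the unique optimizer of the precommitment problem: if W is square-integrable with E[ξW] ≤ W₀ and E[W] − (γ/2)Var[W] = E[Ŵ] − (γ/2)Var[Ŵ], then W = Ŵ almost surely. -/

import Mathlib

/-!
Write `Ŵ = c - b ξ` with `b = e^{rT}/γ`, so that `γ b E[ξ] = 1`. For `W = Ŵ + Z` the
covariance term `-γ Cov(Ŵ, Z) = γ b (E[ξZ] - E[ξ] E[Z])` cancels the gain `E[Z]` in the mean, and
`U(W) - U(Ŵ) = e^{rT} E[ξZ] - (γ/2) Var Z`. Since `E[ξŴ] = W₀`, the budget constraint gives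
`E[ξZ] ≤ 0`; equal objectives then force `Var Z = 0` and `E[ξZ] = 0`. So `Z` is a.s. a
constant `m` with `m E[ξ] = 0`, and `m = 0` because `E[ξ] = e^{-rT} ≠ 0`.
-/

open MeasureTheory ProbabilityTheory Real

noncomputable def meanVariance {Ω : Type*} [MeasurableSpace Ω] (γ : ℝ) (W : Ω → ℝ)
    (P : Measure Ω) : ℝ :=
  P[W] - γ / 2 * Var[W; P]

section

variable {Ω : Type*} [MeasurableSpace Ω] {P : Measure Ω} [IsProbabilityMeasure P]

lemma meanVariance_add (γ : ℝ) {X Z : Ω → ℝ} (hX : MemLp X 2 P) (hZ : MemLp Z 2 P) :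
    meanVariance γ (fun ω ↦ X ω + Z ω) P
      = meanVariance γ X P + P[Z] - γ / 2 * Var[Z; P] - γ * cov[X, Z; P] := by
  rw [meanVariance, meanVariance, integral_add (hX.integrable one_le_two)
    (hZ.integrable one_le_two), variance_fun_add hX hZ]
  ring

variable {ξ X Z : Ω → ℝ} {b c : ℝ}

lemma memLp_of_eq_const_sub_mul (hξ : MemLp ξ 2 P) (hX : ∀ ω, X ω = c - b * ξ ω) :
    MemLp X 2 P := by
  rw [funext hX]
  exact (memLp_const c).sub (hξ.const_mul b)

lemma covariance_of_eq_const_sub_mul (hξ : MemLp ξ 2 P) (hZ : MemLp Z 2 P)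
    (hX : ∀ ω, X ω = c - b * ξ ω) :
    cov[X, Z; P] = -b * ((∫ ω, ξ ω * Z ω ∂P) - P[ξ] * P[Z]) := by
  rw [funext hX, covariance_const_sub_left ((hξ.integrable one_le_two).const_mul b),
    covariance_const_mul_left, covariance_eq_sub hξ hZ]
  simp only [Pi.mul_apply]
  ring

lemma meanVariance_add_of_eq_const_sub_mul (γ : ℝ) (hξ : MemLp ξ 2 P) (hZ : MemLp Z 2 P)
    (hX : ∀ ω, X ω = c - b * ξ ω) (hb : γ * b * P[ξ] = 1) :
    meanVariance γ (fun ω ↦ X ω + Z ω) P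
      = meanVariance γ X P + γ * b * (∫ ω, ξ ω * Z ω ∂P) - γ / 2 * Var[Z; P] := by
  rw [meanVariance_add γ (memLp_of_eq_const_sub_mul hξ hX) hZ,
    covariance_of_eq_const_sub_mul hξ hZ hX]
  linear_combination -P[Z] * hb

lemma integral_mul_of_eq_const_sub_mul (hξ : MemLp ξ 2 P) (hX : ∀ ω, X ω = c - b * ξ ω) :
    ∫ ω, ξ ω * X ω ∂P = c * P[ξ] - b * ∫ ω, ξ ω ^ 2 ∂P := by
  have hξX : (fun ω ↦ ξ ω * X ω) = fun ω ↦ c * ξ ω - b * ξ ω ^ 2 :=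
    funext fun ω ↦ by rw [hX]; ring
  rw [hξX, integral_sub ((hξ.integrable one_le_two).const_mul c)
    (hξ.integrable_sq.const_mul b), integral_const_mul, integral_const_mul]

lemma ae_eq_zero_of_variance_eq_zero_of_integral_mul_eq_zero (hξ : P[ξ] ≠ 0) (hZ : MemLp Z 2 P)
    (hvar : Var[Z; P] = 0) (hξZ : ∫ ω, ξ ω * Z ω ∂P = 0) :
    Z =ᵐ[P] 0 := by
  have hconst := ae_eq_integral_of_variance_eq_zero hZ hvar
  have hmean : P[Z] = 0 := by
    rw [integral_congr_ae (hconst.mono fun ω hω ↦ by rw [hω]), integral_mul_const] at hξZ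
    exact (mul_eq_zero.1 hξZ).resolve_left hξ
  filter_upwards [hconst] with ω hω
  rw [hω, hmean, Pi.zero_apply]

theorem ae_eq_of_meanVariance_eq_of_eq_const_sub_mul {γ : ℝ} {W : Ω → ℝ}
    (hγ : 0 < γ) (hb₀ : 0 ≤ b) (hb : γ * b * P[ξ] = 1) (hξ : MemLp ξ 2 P)
    (hX : ∀ ω, X ω = c - b * ξ ω) (hW : MemLp W 2 P)
    (hbudget : ∫ ω, ξ ω * W ω ∂P ≤ ∫ ω, ξ ω * X ω ∂P)
    (hU : meanVariance γ W P = meanVariance γ X P) :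
    W =ᵐ[P] X := by
  have hXL : MemLp X 2 P := memLp_of_eq_const_sub_mul hξ hX
  have hZ : MemLp (fun ω ↦ W ω - X ω) 2 P := hW.sub hXL
  have hξZ : ∫ ω, ξ ω * (W ω - X ω) ∂P ≤ 0 := by
    simp only [mul_sub]
    rw [integral_sub (f := fun ω ↦ ξ ω * W ω) (g := fun ω ↦ ξ ω * X ω)
      (hξ.integrable_mul hW) (hξ.integrable_mul hXL)]
    linarith
  have hgain := meanVariance_add_of_eq_const_sub_mul γ hξ hZ hX hb
  simp only [add_sub_cancel, hU] at hgain
  have hγb : 0 ≤ γ * b := mul_nonneg hγ.le hb₀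
  have hvar : Var[fun ω ↦ W ω - X ω; P] = 0 := by
    nlinarith [variance_nonneg (fun ω ↦ W ω - X ω) P, mul_nonpos_of_nonneg_of_nonpos hγb hξZ]
  have hξZ0 : ∫ ω, ξ ω * (W ω - X ω) ∂P = 0 := by
    rw [hvar, mul_zero, sub_zero, left_eq_add] at hgain
    exact (mul_eq_zero.1 hgain).resolve_left (left_ne_zero_of_mul_eq_one hb)
  filter_upwards [ae_eq_zero_of_variance_eq_zero_of_integral_mul_eq_zero
    (right_ne_zero_of_mul_eq_one hb) hZ hvar hξZ0] with ω hω
  exact sub_eq_zero.1 hω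

end

theorem precommitment_optimal_unique_general
    {Ω : Type*} [MeasurableSpace Ω] (P : Measure Ω) [IsProbabilityMeasure P]
    (T r γ W₀ : ℝ) (hγ : 0 < γ)
    (ξ : Ω → ℝ) (hξ : MemLp ξ 2 P)
    (hξmean : ∫ ω, ξ ω ∂P = exp (-(r * T)))
    (What : Ω → ℝ)
    (hWhat : ∀ ω, What ω = W₀ * exp (r * T)
        + (1 / γ) * (∫ ω', (ξ ω') ^ 2 ∂P) * exp (2 * (r * T))
        - (1 / γ) * ξ ω * exp (r * T)) :
    ∀ W : Ω → ℝ, MemLp W 2 P → (∫ ω, ξ ω * W ω ∂P) ≤ W₀ →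
      (∫ ω, W ω ∂P) - (γ / 2) * variance W P
        = (∫ ω, What ω ∂P) - (γ / 2) * variance What P →
      W =ᵐ[P] What := by
  intro W hW hbudget hU
  set b := exp (r * T) / γ
  have hWhat_affine : ∀ ω, What ω
      = (W₀ * exp (r * T) + (1 / γ) * (∫ ω', (ξ ω') ^ 2 ∂P) * exp (2 * (r * T))) - b * ξ ω :=
    fun ω ↦ by rw [hWhat]; ring
  have hb : γ * b * P[ξ] = 1 := by
    rw [hξmean, mul_div_cancel₀ _ hγ.ne', ← exp_add, add_neg_cancel, exp_zero]
  have hcost : ∫ ω, ξ ω * What ω ∂P = W₀ := by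
    rw [integral_mul_of_eq_const_sub_mul hξ hWhat_affine, hξmean, exp_neg, two_mul, exp_add]
    simp only [b]
    field_simp
    ring
  exact ae_eq_of_meanVariance_eq_of_eq_const_sub_mul hγ (by positivity) hb hξ hWhat_affine hW
    (hcost ▸ hbudget) hU

/-- `Ŵ` is the unique optimizer of the precommitment mean-variance problem:
if `W` is square-integrable with `E[ξW] ≤ W₀` and
`E[W] − (γ/2)Var[W] = E[Ŵ] − (γ/2)Var[Ŵ]`, then `W = Ŵ` almost surely. -/
theorem precommitment_optimal_unique
    {Ω : Type*} [MeasurableSpace Ω] (P : Measure Ω) [IsProbabilityMeasure P]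
    (T r γ W₀ : ℝ) (hT : 0 < T) (hγ : 0 < γ)
    (ξ : Ω → ℝ) (hξ : MemLp ξ 2 P)
    (hξpos : ∀ᵐ ω ∂P, 0 < ξ ω)
    (hξmean : ∫ ω, ξ ω ∂P = exp (-(r * T)))
    (What : Ω → ℝ)
    (hWhat : ∀ ω, What ω = W₀ * exp (r * T)
        + (1 / γ) * (∫ ω', (ξ ω') ^ 2 ∂P) * exp (2 * (r * T))
        - (1 / γ) * ξ ω * exp (r * T)) :
    ∀ W : Ω → ℝ, MemLp W 2 P → (∫ ω, ξ ω * W ω ∂P) ≤ W₀ →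
      (∫ ω, W ω ∂P) - (γ / 2) * variance W P
        = (∫ ω, What ω ∂P) - (γ / 2) * variance What P →
      W =ᵐ[P] What :=
  precommitment_optimal_unique_general P T r γ W₀ hγ ξ hξ hξmean What hWhat
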